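/- Let f*(t) = 1/2 + (1/2)·∏_{k=1}^{∞} cos(t/k!) and t_n = π·(2n)!. Then f*(t_n) ≠ 0 for all n, f*(t_n ± π) = 0, and the ratio f*(t_n - π)·f*(t_n + π)/f*(t_n)² = 1/(1 + f_s(t_n))² tends to +∞ as n → ∞, where f_s(t) = ∏_{k=1}^{∞} cos(t/k!). -/

import Mathlib

open Nat Filter

noncomputable def fs (t : ℝ) : ℝ := ∏' k : ℕ, Real.cos (t / ((k + 1)! : ℝ))

noncomputable def fstar (t : ℝ) : ℝ := 1 / 2 + (1 / 2) * fs t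

noncomputable def tn (n : ℕ) : ℝ := Real.pi * ((2 * n)! : ℝ)

/-!
For `n ≥ 1` the first `2n` factors of `fs (tn n)` are `cos (π (2n)! / (k+1)!)`, which equal `1`
for `k + 1 < 2n` (an even multiple of `π`) and `cos π = -1` for `k + 1 = 2n`. The remaining angles
`θᵢ = π (2n)! / (2n+1+i)!` lie in `(0, π / ((2n+1) 3^i)]`, so the product `P` of their cosines
satisfies `P ≤ cos θ₀ < 1` and, through `-log (cos x) ≤ x²` for `|x| ≤ π/3`,
`1 - P ≤ ∑ θᵢ² = O(1/n²)`. Hence `1 + fs (tn n) = 1 - P` tends to `0` through positive values.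
At `tn n ± π` the factor `cos (t/2)` vanishes, so `fstar = 1/2` there and the ratio is
`1 / (1 + fs (tn n))²`.
-/

open Real Topology

lemma Real.one_half_le_cos_of_abs_le {x : ℝ} (hx : |x| ≤ π / 3) : 1 / 2 ≤ cos x := by
  rw [← cos_abs, ← cos_pi_div_three]
  exact cos_le_cos_of_nonneg_of_le_pi (abs_nonneg x) (by linarith [pi_pos]) hx

lemma Real.cos_pos_of_abs_le {x : ℝ} (hx : |x| ≤ π / 3) : 0 < cos x := by
  linarith [one_half_le_cos_of_abs_le hx]

lemma Real.neg_log_cos_le_sq {x : ℝ} (hx : |x| ≤ π / 3) : -log (cos x) ≤ x ^ 2 := by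
  have hc := one_half_le_cos_of_abs_le hx
  have hpos := cos_pos_of_abs_le hx
  have hlog := log_le_sub_one_of_pos (inv_pos.mpr hpos)
  rw [log_inv] at hlog
  -- `-log c ≤ 1/c - 1 ≤ 2 (1 - c)` for `c ≥ 1/2`, and `2 (1 - cos x) ≤ x²`
  have hinv : (cos x)⁻¹ - 1 ≤ 2 * (1 - cos x) := by
    rw [show (cos x)⁻¹ - 1 = (1 - cos x) / cos x by field_simp, div_le_iff₀ hpos]
    nlinarith [cos_le_one x]
  linarith [one_sub_sq_div_two_le_cos (x := x)]

lemma Real.log_cos_nonpos_of_abs_le {x : ℝ} (hx : |x| ≤ π / 3) : log (cos x) ≤ 0 :=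
  log_nonpos (cos_pos_of_abs_le hx).le (cos_le_one x)

section CosProduct

variable {ι : Type*} {θ : ι → ℝ}

lemma summable_log_cos (hθ : ∀ i, |θ i| ≤ π / 3) (hs : Summable fun i ↦ θ i ^ 2) :
    Summable fun i ↦ log (cos (θ i)) :=
  (hs.of_nonneg_of_le (fun i ↦ neg_nonneg.mpr (log_cos_nonpos_of_abs_le (hθ i)))
    (fun i ↦ neg_log_cos_le_sq (hθ i))).of_neg

lemma exp_tsum_log_cos_eq_tprod (hθ : ∀ i, |θ i| ≤ π / 3)
    (hs : Summable fun i ↦ θ i ^ 2) :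
    exp (∑' i, log (cos (θ i))) = ∏' i, cos (θ i) :=
  rexp_tsum_eq_tprod (fun i ↦ cos_pos_of_abs_le (hθ i)) (summable_log_cos hθ hs)

lemma multipliable_cos (hθ : ∀ i, |θ i| ≤ π / 3) (hs : Summable fun i ↦ θ i ^ 2) :
    Multipliable fun i ↦ cos (θ i) :=
  Real.multipliable_of_summable_log (fun i ↦ cos_pos_of_abs_le (hθ i))
    (summable_log_cos hθ hs)

lemma tprod_cos_le_cos (hθ : ∀ i, |θ i| ≤ π / 3) (hs : Summable fun i ↦ θ i ^ 2)
    (j : ι) :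
    ∏' i, cos (θ i) ≤ cos (θ j) := by
  have hj : -log (cos (θ j)) ≤ ∑' i, -log (cos (θ i)) :=
    (summable_log_cos hθ hs).neg.le_tsum j
      fun i _ ↦ neg_nonneg.mpr (log_cos_nonpos_of_abs_le (hθ i))
  rw [tsum_neg, neg_le_neg_iff] at hj
  rw [← exp_tsum_log_cos_eq_tprod hθ hs, ← exp_log (cos_pos_of_abs_le (hθ j))]
  exact exp_le_exp.mpr hj

lemma one_sub_tsum_sq_le_tprod_cos (hθ : ∀ i, |θ i| ≤ π / 3)
    (hs : Summable fun i ↦ θ i ^ 2) :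
    1 - ∑' i, θ i ^ 2 ≤ ∏' i, cos (θ i) := by
  have hlog : ∑' i, -log (cos (θ i)) ≤ ∑' i, θ i ^ 2 :=
    (summable_log_cos hθ hs).neg.tsum_le_tsum (fun i ↦ neg_log_cos_le_sq (hθ i)) hs
  rw [tsum_neg] at hlog
  rw [← exp_tsum_log_cos_eq_tprod hθ hs]
  linarith [add_one_le_exp (∑' i, log (cos (θ i)))]

end CosProduct

lemma fs_eq_zero_of_cos_half_eq_zero {t : ℝ} (h : cos (t / 2) = 0) : fs t = 0 :=
  tprod_of_exists_eq_zero ⟨1, by norm_num [Nat.factorial, h]⟩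

lemma exists_tn_eq_two_mul_pi {n : ℕ} (hn : 0 < n) : ∃ m : ℕ, tn n = 2 * m * π := by
  obtain ⟨m, hm⟩ : 2 ∣ (2 * n)! := Nat.dvd_factorial two_pos (by omega)
  exact ⟨m, by rw [tn, hm]; push_cast; ring⟩

lemma fs_tn_sub_pi {n : ℕ} (hn : 0 < n) : fs (tn n - π) = 0 := by
  obtain ⟨m, hm⟩ := exists_tn_eq_two_mul_pi hn
  exact fs_eq_zero_of_cos_half_eq_zero
    (cos_eq_zero_iff.mpr ⟨(m : ℤ) - 1, by rw [hm]; push_cast; ring⟩)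

lemma fs_tn_add_pi {n : ℕ} (hn : 0 < n) : fs (tn n + π) = 0 := by
  obtain ⟨m, hm⟩ := exists_tn_eq_two_mul_pi hn
  exact fs_eq_zero_of_cos_half_eq_zero
    (cos_eq_zero_iff.mpr ⟨m, by rw [hm]; push_cast; ring⟩)

lemma cos_tn_div_factorial_of_lt {n k : ℕ} (hk : k + 1 < 2 * n) :
    cos (tn n / ((k + 1)! : ℝ)) = 1 := by
  obtain ⟨q, hq⟩ : (k + 1)! ∣ (2 * n - 1)! := Nat.factorial_dvd_factorial (by omega)
  have hfac : (2 * n)! = 2 * n * ((k + 1)! * q) := by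
    rw [← hq, ← Nat.mul_factorial_pred (by omega : 2 * n ≠ 0)]
  have : tn n / ((k + 1)! : ℝ) = ((n * q : ℕ) : ℝ) * (2 * π) := by
    rw [tn, hfac]
    push_cast
    field_simp
  rw [this, cos_nat_mul_two_pi]

lemma prod_range_cos_tn_div_factorial {n : ℕ} (hn : 0 < n) :
    ∏ k ∈ Finset.range (2 * n), cos (tn n / ((k + 1)! : ℝ)) = -1 := by
  obtain ⟨m, hm⟩ : ∃ m, 2 * n = m + 1 := ⟨2 * n - 1, by omega⟩
  rw [hm, Finset.prod_range_succ, Finset.prod_eq_one fun k hk ↦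
    cos_tn_div_factorial_of_lt (by rw [Finset.mem_range] at hk; omega), one_mul, tn, hm,
    mul_div_cancel_right₀ _ (by positivity), cos_pi]

lemma tn_div_factorial_pos (n i : ℕ) : 0 < tn n / ((i + 2 * n + 1)! : ℝ) := by
  unfold tn; positivity

lemma tn_div_factorial_le {n : ℕ} (hn : 0 < n) (i : ℕ) :
    tn n / ((i + 2 * n + 1)! : ℝ) ≤ π / ((2 * n + 1) * 3 ^ i) := by
  have hfac : (2 * n)! * ((2 * n + 1) * 3 ^ i) ≤ (i + 2 * n + 1)! :=
    calc (2 * n)! * ((2 * n + 1) * 3 ^ i)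
        ≤ (2 * n)! * (2 * n + 1) ^ (i + 1) := by
          rw [pow_succ']; gcongr; omega
      _ ≤ (2 * n + (i + 1))! := Nat.factorial_mul_pow_le_factorial
      _ = (i + 2 * n + 1)! := by rw [show 2 * n + (i + 1) = i + 2 * n + 1 by ring]
  have hfac' : ((2 * n)! : ℝ) * ((2 * n + 1) * 3 ^ i) ≤ (i + 2 * n + 1)! := by
    exact_mod_cast hfac
  calc tn n / ((i + 2 * n + 1)! : ℝ)
      ≤ π * (2 * n)! / ((2 * n)! * ((2 * n + 1) * 3 ^ i)) := by
        unfold tn; gcongr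
    _ = π / ((2 * n + 1) * 3 ^ i) := by
        rw [mul_comm (π : ℝ), mul_div_mul_left _ _ (by positivity)]

lemma abs_tn_div_factorial_le {n : ℕ} (hn : 0 < n) (i : ℕ) :
    |tn n / ((i + 2 * n + 1)! : ℝ)| ≤ π / 3 := by
  rw [abs_of_pos (tn_div_factorial_pos n i)]
  refine (tn_div_factorial_le hn i).trans (div_le_div_of_nonneg_left pi_pos.le (by norm_num) ?_)
  have h1 : (1 : ℝ) ≤ n := by exact_mod_cast hn
  nlinarith [one_le_pow₀ (by norm_num : (1 : ℝ) ≤ 3) (n := i)]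

lemma sq_tn_div_factorial_le {n : ℕ} (hn : 0 < n) (i : ℕ) :
    (tn n / ((i + 2 * n + 1)! : ℝ)) ^ 2 ≤ (π / (2 * n + 1)) ^ 2 * (1 / 9) ^ i := by
  calc (tn n / ((i + 2 * n + 1)! : ℝ)) ^ 2
      ≤ (π / ((2 * n + 1) * 3 ^ i)) ^ 2 :=
        pow_le_pow_left₀ (tn_div_factorial_pos n i).le (tn_div_factorial_le hn i) 2
    _ = (π / (2 * n + 1)) ^ 2 * (1 / 9) ^ i := by
        rw [show (1 / 9 : ℝ) = (1 / 3) ^ 2 by norm_num, ← pow_mul, mul_comm 2 i, pow_mul,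
          ← mul_pow, one_div_pow, ← div_eq_mul_one_div, div_div]

lemma summable_sq_tn_div_factorial {n : ℕ} (hn : 0 < n) :
    Summable fun i : ℕ ↦ (tn n / ((i + 2 * n + 1)! : ℝ)) ^ 2 :=
  ((summable_geometric_of_lt_one (by norm_num) (by norm_num)).mul_left _).of_nonneg_of_le
    (fun _ ↦ sq_nonneg _) (sq_tn_div_factorial_le hn)

lemma tsum_sq_tn_div_factorial_le {n : ℕ} (hn : 0 < n) :
    ∑' i : ℕ, (tn n / ((i + 2 * n + 1)! : ℝ)) ^ 2 ≤ 9 / 8 * (π / (2 * n + 1)) ^ 2 := by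
  have hgeom := (summable_geometric_of_lt_one (r := (1 / 9 : ℝ)) (by norm_num) (by norm_num))
  calc ∑' i : ℕ, (tn n / ((i + 2 * n + 1)! : ℝ)) ^ 2
      ≤ ∑' i : ℕ, (π / (2 * n + 1)) ^ 2 * (1 / 9 : ℝ) ^ i :=
        (summable_sq_tn_div_factorial hn).tsum_le_tsum (sq_tn_div_factorial_le hn)
          (hgeom.mul_left _)
    _ = 9 / 8 * (π / (2 * n + 1)) ^ 2 := by
        rw [tsum_mul_left, tsum_geometric_of_lt_one (by norm_num) (by norm_num)]
        norm_num
        ring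

lemma fs_tn_eq_neg_tprod {n : ℕ} (hn : 0 < n) :
    fs (tn n) = -∏' i : ℕ, cos (tn n / ((i + 2 * n + 1)! : ℝ)) := by
  set f : ℕ → ℝ := fun k ↦ cos (tn n / ((k + 1)! : ℝ))
  have htail : Multipliable fun i ↦ f (i + 2 * n) :=
    multipliable_cos (abs_tn_div_factorial_le hn) (summable_sq_tn_div_factorial hn)
  rw [fs, ← htail.prod_mul_tprod_nat_mul', prod_range_cos_tn_div_factorial hn, neg_one_mul]

lemma one_add_fs_tn_pos {n : ℕ} (hn : 0 < n) : 0 < 1 + fs (tn n) := by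
  have hle := tprod_cos_le_cos (abs_tn_div_factorial_le hn) (summable_sq_tn_div_factorial hn) 0
  have hlt : cos (tn n / ((0 + 2 * n + 1)! : ℝ)) < 1 := by
    rw [← cos_zero]
    exact cos_lt_cos_of_nonneg_of_le_pi le_rfl
      ((abs_le.mp (abs_tn_div_factorial_le hn 0)).2.trans (by linarith [pi_pos]))
      (tn_div_factorial_pos n 0)
  rw [fs_tn_eq_neg_tprod hn]
  linarith

lemma one_add_fs_tn_le {n : ℕ} (hn : 0 < n) :
    1 + fs (tn n) ≤ 9 / 8 * (π / (2 * n + 1)) ^ 2 := by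
  have := one_sub_tsum_sq_le_tprod_cos (abs_tn_div_factorial_le hn)
    (summable_sq_tn_div_factorial hn)
  rw [fs_tn_eq_neg_tprod hn]
  linarith [tsum_sq_tn_div_factorial_le hn]

lemma tendsto_one_add_fs_tn : Tendsto (fun n ↦ 1 + fs (tn n)) atTop (𝓝[>] 0) := by
  have hden : Tendsto (fun n : ℕ ↦ (2 * n + 1 : ℝ)) atTop atTop :=
    tendsto_atTop_add_const_right _ _
      (tendsto_natCast_atTop_atTop.const_mul_atTop two_pos)
  have hbound : Tendsto (fun n : ℕ ↦ 9 / 8 * (π / (2 * n + 1)) ^ 2) atTop (𝓝 0) := by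
    simpa using ((tendsto_const_nhds.div_atTop hden).pow 2).const_mul (9 / 8 : ℝ)
  refine tendsto_nhdsWithin_of_tendsto_nhds_of_eventually_within _
    (squeeze_zero' ?_ ?_ hbound) ?_ <;>
    filter_upwards [eventually_gt_atTop 0] with n hn
  exacts [(one_add_fs_tn_pos hn).le, one_add_fs_tn_le hn, one_add_fs_tn_pos hn]

lemma fstar_ratio_eq {n : ℕ} (hn : 0 < n) :
    fstar (tn n - π) * fstar (tn n + π) / fstar (tn n) ^ 2 = 1 / (1 + fs (tn n)) ^ 2 := by
  have hne := (one_add_fs_tn_pos hn).ne'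
  rw [fstar, fstar, fstar, fs_tn_sub_pi hn, fs_tn_add_pi hn]
  field_simp
  ring

theorem stmt8 :
    (∀ n : ℕ, 0 < n → fstar (tn n) ≠ 0) ∧
    (∀ n : ℕ, 0 < n → fs (tn n - Real.pi) = 0 ∧ fs (tn n + Real.pi) = 0) ∧
    (∀ n : ℕ, 0 < n →
      fstar (tn n - Real.pi) * fstar (tn n + Real.pi) / (fstar (tn n)) ^ 2 =
        1 / (1 + fs (tn n)) ^ 2) ∧
    Tendsto
      (fun n => fstar (tn n - Real.pi) * fstar (tn n + Real.pi) / (fstar (tn n)) ^ 2)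
      atTop atTop := by
  refine ⟨fun n hn ↦ ?_, fun n hn ↦ ⟨fs_tn_sub_pi hn, fs_tn_add_pi hn⟩,
    fun n hn ↦ fstar_ratio_eq hn, ?_⟩
  · rw [fstar]
    linarith [one_add_fs_tn_pos hn]
  · have hinv : Tendsto (fun x : ℝ ↦ 1 / x ^ 2) (𝓝[>] 0) atTop := by
      simpa only [one_div, ← inv_pow, Function.comp_def] using
        (tendsto_pow_atTop (α := ℝ) two_ne_zero).comp tendsto_inv_nhdsGT_zero
    refine (hinv.comp tendsto_one_add_fs_tn).congr' ?_
    filter_upwards [eventually_gt_atTop 0] with n hn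
    exact (fstar_ratio_eq hn).symm
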